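/- Let D ⊆ E admit a d-flow and let e ∈ E. Then A(D ⊕ e) ≠ A(D ⊕ rev e) if and only if e ∈ A(D + e) or rev e ∈ A(D + e). -/

import Mathlib

open Finset

section Defs

variable {V : Type*}

/-- Reversal of a directed edge. -/
def drev (e : V × V) : V × V := (e.2, e.1)

/-- `K` is a subgraph of the (symmetric) edge set `E`: it contains either both or
neither of `e` and `drev e` for every `e ∈ E`. -/
def IsSubgraph [DecidableEq V] (E K : Finset (V × V)) : Prop :=
  K ⊆ E ∧ ∀ e ∈ E, (e ∈ K ↔ drev e ∈ K)

/-- `L` is an orientation of the (symmetric) edge set `E`: it contains exactly one of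
`e` and `drev e` for every `e ∈ E`. -/
def IsOrientation [DecidableEq V] (E L : Finset (V × V)) : Prop :=
  L ⊆ E ∧ ∀ e ∈ E, (e ∈ L ↔ drev e ∉ L)

variable [Fintype V] [DecidableEq V]

/-- `f` is a `d`-flow on the directed subgraph `D` of the graph with edge set `E`. -/
def IsFlow (E D : Finset (V × V)) (d : V → ℤ) (f : V × V → ℝ) : Prop :=
  (∀ e ∈ E, 0 ≤ f e ∧ f e ≤ 1) ∧
  (∀ e, e ∉ D → f e = 0) ∧
  ∀ u : V,
    ((Finset.univ.filter (fun v : V => (u, v) ∈ E)).sum fun v => f (u, v)) -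
      ((Finset.univ.filter (fun v : V => (v, u) ∈ E)).sum fun v => f (v, u)) = (d u : ℝ)

/-- A `d`-flow exists on `D`. -/
def AdmitsFlow (E D : Finset (V × V)) (d : V → ℤ) : Prop :=
  ∃ f : V × V → ℝ, IsFlow E D d f

/-- The `w`-cost of a flow `f`. -/
def flowCost (E : Finset (V × V)) (w : V × V → ℝ) (f : V × V → ℝ) : ℝ :=
  ∑ e ∈ E, w e * f e

/-- `f` is a min-cost `d`-flow on `D`. -/
def IsMinCostFlow (E D : Finset (V × V)) (d : V → ℤ) (w : V × V → ℝ)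
    (f : V × V → ℝ) : Prop :=
  IsFlow E D d f ∧ ∀ g : V × V → ℝ, IsFlow E D d g → flowCost E w f ≤ flowCost E w g

/-- The `{0,1}`-valued function determined by a set of edges. -/
def ind (S : Finset (V × V)) : V × V → ℝ := fun e => if e ∈ S then 1 else 0

/-- `A` assigns to every flow-admitting `D ⊆ E` the (edge set of the) unique,
`{0,1}`-valued min-cost `d`-flow on `D`. -/
def GoodA (E : Finset (V × V)) (d : V → ℤ) (w : V × V → ℝ)
    (A : Finset (V × V) → Finset (V × V)) : Prop :=
  ∀ D : Finset (V × V), D ⊆ E → AdmitsFlow E D d →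
    IsMinCostFlow E D d w (ind (A D)) ∧
    ∀ f : V × V → ℝ, IsMinCostFlow E D d w f → f = ind (A D)

/-- `A(D) = A(D')`: both `D` and `D'` admit a `d`-flow and their unique min-cost
`d`-flows coincide.  (If one of them admits no `d`-flow this is false.) -/
def AEq (E : Finset (V × V)) (d : V → ℤ) (A : Finset (V × V) → Finset (V × V))
    (D D' : Finset (V × V)) : Prop :=
  AdmitsFlow E D d ∧ AdmitsFlow E D' d ∧ A D = A D'

/-- `D ⊕ e := (D ∪ {e}) \ {drev e}`. -/
def oplus (D : Finset (V × V)) (e : V × V) : Finset (V × V) := insert e D \ {drev e}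

/-- `D + e := D ∪ {e, drev e}`. -/
def padd (D : Finset (V × V)) (e : V × V) : Finset (V × V) := D ∪ {e, drev e}

/-- `D − e := D \ {e, drev e}`. -/
def psub (D : Finset (V × V)) (e : V × V) : Finset (V × V) := D \ {e, drev e}

/-- The representative of `{e, drev e}` lying in the reference orientation `E'`. -/
def chi (E' : Finset (V × V)) (e : V × V) : V × V := if e ∈ E' then e else drev e

/-- The map `φ_e`. -/
noncomputable def phiE (E : Finset (V × V)) (d : V → ℤ)
    (A : Finset (V × V) → Finset (V × V)) (E' : Finset (V × V))
    (e : V × V) (D : Finset (V × V)) : Finset (V × V) := by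
  classical
  exact
    if ¬ AEq E d A D (oplus D e) then oplus D (drev e)
    else if ¬ AEq E d A D (oplus D (drev e)) then oplus D e
    else if e ∈ D then oplus D (chi E' e) else oplus D (drev (chi E' e))

/-- The map `ψ_e`. -/
noncomputable def psiE (E : Finset (V × V)) (d : V → ℤ)
    (A : Finset (V × V) → Finset (V × V)) (E' : Finset (V × V))
    (e : V × V) (D : Finset (V × V)) : Finset (V × V) := by
  classical
  exact
    if ¬ AEq E d A D (padd D e) then psub D e
    else if ¬ AEq E d A D (psub D e) then padd D e
    else if chi E' e ∈ D then padd D e else psub D e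

end Defs

/-!
Write `F = A(D + e)`. If `F` avoids both `e` and `rev e`, it is a flow on `D ⊕ e` and on
`D ⊕ rev e`, and being optimal on the larger `D + e` it is optimal, hence equal to `A`, on both.
Conversely, if `A(D ⊕ e) = A(D ⊕ rev e) = S`, then `S` avoids `e` and `rev e`, and `S` is optimal
on `D + e`: cancelling the 2-cycle `e, rev e` by `min (g e) (g (rev e))` turns any flow `g` on
`D + e` into a flow on `D ⊕ e` or `D ⊕ rev e` of no larger cost. So `S = F`.
-/

section MinCostFlow

variable {V : Type*}

@[simp]
lemma drev_drev (e : V × V) : drev (drev e) = e := rfl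

lemma drev_involutive : Function.Involutive (drev : V × V → V × V) := drev_drev

lemma flowCost_mono {E : Finset (V × V)} {w f g : V × V → ℝ} (hw : ∀ e ∈ E, 0 ≤ w e)
    (hfg : ∀ e ∈ E, f e ≤ g e) : flowCost E w f ≤ flowCost E w g :=
  sum_le_sum fun x hx => mul_le_mul_of_nonneg_left (hfg x hx) (hw x hx)

variable [DecidableEq V] {E D D' : Finset (V × V)} {e : V × V}

lemma ind_injective : Function.Injective (ind : Finset (V × V) → V × V → ℝ) := by
  intro S T h
  ext x
  have hx := congrFun h x
  by_cases hS : x ∈ S <;> by_cases hT : x ∈ T <;> simp_all [ind]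

lemma ind_pair_drev (e x : V × V) : ind {e, drev e} (drev x) = ind {e, drev e} x := by
  simp only [ind, mem_insert, mem_singleton, drev_involutive.eq_iff, drev_drev, or_comm]

lemma drev_notMem_oplus (D : Finset (V × V)) (e : V × V) : drev e ∉ oplus D e := by
  simp [oplus]

lemma oplus_subset_padd (D : Finset (V × V)) (e : V × V) : oplus D e ⊆ padd D e := by
  intro x hx
  simp only [oplus, padd, mem_sdiff, mem_insert, mem_union, mem_singleton] at hx ⊢
  tauto

lemma oplus_drev_subset_padd (D : Finset (V × V)) (e : V × V) : oplus D (drev e) ⊆ padd D e := by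
  intro x hx
  simp only [oplus, padd, drev_drev, mem_sdiff, mem_insert, mem_union, mem_singleton] at hx ⊢
  tauto

lemma subset_padd (D : Finset (V × V)) (e : V × V) : D ⊆ padd D e :=
  subset_union_left

lemma padd_drev (D : Finset (V × V)) (e : V × V) : padd D (drev e) = padd D e := by
  simp only [padd, drev_drev, pair_comm]

lemma padd_subset (hD : D ⊆ E) (he : e ∈ E) (hre : drev e ∈ E) : padd D e ⊆ E :=
  union_subset hD (insert_subset he (singleton_subset_iff.2 hre))

variable [Fintype V] {d : V → ℤ} {w : V × V → ℝ} {f g : V × V → ℝ}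

def netFlow (E : Finset (V × V)) (f : V × V → ℝ) (u : V) : ℝ :=
  (∑ v ∈ univ.filter (fun v => (u, v) ∈ E), f (u, v)) -
    ∑ v ∈ univ.filter (fun v => (v, u) ∈ E), f (v, u)

lemma IsFlow.netFlow_eq (hf : IsFlow E D d f) (u : V) : netFlow E f u = d u :=
  hf.2.2 u

lemma netFlow_sub (E : Finset (V × V)) (f g : V × V → ℝ) (u : V) :
    netFlow E (f - g) u = netFlow E f u - netFlow E g u := by
  simp only [netFlow, Pi.sub_apply, sum_sub_distrib]
  ring

lemma netFlow_eq_zero_of_symm (hE : ∀ e, e ∈ E ↔ drev e ∈ E) {c : V × V → ℝ}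
    (hc : ∀ x, c (drev x) = c x) (u : V) : netFlow E c u = 0 := by
  have hfilter : univ.filter (fun v => (v, u) ∈ E) = univ.filter (fun v => (u, v) ∈ E) := by
    ext v
    simp only [mem_filter, mem_univ, true_and]
    exact hE (v, u)
  rw [netFlow, hfilter, sub_eq_zero]
  exact sum_congr rfl fun v _ => hc (v, u)

lemma IsFlow.mono (hf : IsFlow E D d f) (hDD' : D ⊆ D') : IsFlow E D' d f :=
  ⟨hf.1, fun x hx => hf.2.1 x fun hxD => hx (hDD' hxD), hf.2.2⟩

lemma IsFlow.oplus_of_padd (hf : IsFlow E (padd D e) d f) (h0 : f (drev e) = 0) :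
    IsFlow E (oplus D e) d f := by
  refine ⟨hf.1, fun x hx => ?_, hf.2.2⟩
  by_cases hxe : x = drev e
  · rw [hxe, h0]
  · refine hf.2.1 x fun hxp => hx ?_
    simp only [oplus, padd, mem_union, mem_sdiff, mem_insert, mem_singleton] at hxp ⊢
    tauto

lemma IsFlow.notMem_of_ind {S : Finset (V × V)} {x : V × V} (hf : IsFlow E D d (ind S))
    (hx : x ∉ D) : x ∉ S := fun hxS => by
  simpa [ind, hxS] using hf.2.1 x hx

lemma AdmitsFlow.mono (h : AdmitsFlow E D d) (hDD' : D ⊆ D') : AdmitsFlow E D' d :=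
  let ⟨f, hf⟩ := h
  ⟨f, hf.mono hDD'⟩

lemma IsMinCostFlow.of_subset (h : IsMinCostFlow E D' d w f) (hDD' : D ⊆ D')
    (hf : IsFlow E D d f) : IsMinCostFlow E D d w f :=
  ⟨hf, fun g hg => h.2 g (hg.mono hDD')⟩

/- Subtracting the indicator of the set `{e, drev e}`, rather than those of `e` and `drev e`,
keeps this correct when `e` is a loop. -/
lemma IsFlow.sub_cycle (hE : ∀ e, e ∈ E ↔ drev e ∈ E) (hg : IsFlow E (padd D e) d g) {m : ℝ}
    (hm0 : 0 ≤ m) (hme : m ≤ g e) (hmr : m ≤ g (drev e)) :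
    IsFlow E (padd D e) d (g - m • ind {e, drev e}) := by
  have hcycle : ∀ x, x ∈ ({e, drev e} : Finset (V × V)) → m ≤ g x := by
    simp only [mem_insert, mem_singleton]
    rintro x (rfl | rfl) <;> assumption
  refine ⟨fun x hx => ?_, fun x hx => ?_, fun u => ?_⟩
  · have hb := hg.1 x hx
    by_cases hxc : x ∈ ({e, drev e} : Finset (V × V))
    · have := hcycle x hxc
      simp only [Pi.sub_apply, Pi.smul_apply, ind, hxc, if_true, smul_eq_mul]
      constructor <;> linarith
    · simpa [ind, hxc] using hb
  · have hxc : x ∉ ({e, drev e} : Finset (V × V)) := fun hxc => hx (mem_union_right _ hxc)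
    simp [ind, hxc, hg.2.1 x hx]
  · have hsymm : ∀ x, (m • ind {e, drev e}) (drev x) = (m • ind {e, drev e}) x := fun x => by
      simp only [Pi.smul_apply, ind_pair_drev]
    change netFlow E _ u = d u
    rw [netFlow_sub, hg.netFlow_eq, netFlow_eq_zero_of_symm hE hsymm, sub_zero]

lemma IsFlow.exists_oplus_le (hE : ∀ e, e ∈ E ↔ drev e ∈ E) (hw : ∀ e ∈ E, 0 ≤ w e)
    (he : e ∈ E) (hg : IsFlow E (padd D e) d g) :
    ∃ g', (IsFlow E (oplus D e) d g' ∨ IsFlow E (oplus D (drev e)) d g') ∧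
      flowCost E w g' ≤ flowCost E w g := by
  set m := min (g e) (g (drev e))
  have hm0 : 0 ≤ m := le_min (hg.1 e he).1 (hg.1 _ ((hE e).1 he)).1
  have hflow := hg.sub_cycle hE hm0 (min_le_left _ _) (min_le_right _ _)
  refine ⟨g - m • ind {e, drev e}, ?_, flowCost_mono hw fun x _ => ?_⟩
  · rcases le_total (g e) (g (drev e)) with hle | hle
    · refine Or.inr (IsFlow.oplus_of_padd (by rwa [padd_drev]) ?_)
      simp [ind, m, min_eq_left hle]
    · refine Or.inl (hflow.oplus_of_padd ?_)
      simp [ind, m, min_eq_right hle]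
  · have hind : 0 ≤ ind {e, drev e} x := by unfold ind; split_ifs <;> norm_num
    exact sub_le_self _ (mul_nonneg hm0 hind)

lemma IsMinCostFlow.of_oplus (hE : ∀ e, e ∈ E ↔ drev e ∈ E) (hw : ∀ e ∈ E, 0 ≤ w e) (he : e ∈ E)
    (h : IsMinCostFlow E (oplus D e) d w f) (hrev : IsMinCostFlow E (oplus D (drev e)) d w f) :
    IsMinCostFlow E (padd D e) d w f := by
  refine ⟨h.1.mono (oplus_subset_padd D e), fun g hg => ?_⟩
  obtain ⟨g', hg' | hg', hle⟩ := hg.exists_oplus_le hE hw he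
  · exact (h.2 g' hg').trans hle
  · exact (hrev.2 g' hg').trans hle

lemma IsMinCostFlow.oplus_of_padd (h : IsMinCostFlow E (padd D e) d w f) (h0 : f (drev e) = 0) :
    IsMinCostFlow E (oplus D e) d w f :=
  h.of_subset (oplus_subset_padd D e) (h.1.oplus_of_padd h0)

lemma GoodA.eq_of_isMinCostFlow {A : Finset (V × V) → Finset (V × V)} (hA : GoodA E d w A)
    (hD : D ⊆ E) (hf : IsMinCostFlow E D d w f) : f = ind (A D) :=
  (hA D hD ⟨f, hf.1⟩).2 f hf

end MinCostFlow

theorem minCostFlow_oplus_ne_oplus_rev_iff_general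
    {V : Type*} [Fintype V] [DecidableEq V]
    (E : Finset (V × V)) (hE_symm : ∀ e, e ∈ E ↔ drev e ∈ E)
    (d : V → ℤ)
    (w : V × V → ℝ) (hw : ∀ e ∈ E, 0 < w e)
    (A : Finset (V × V) → Finset (V × V)) (hA : GoodA E d w A)
    (D : Finset (V × V)) (hD : D ⊆ E) (hDf : AdmitsFlow E D d)
    (e : V × V) (he : e ∈ E) :
    ¬ AEq E d A (oplus D e) (oplus D (drev e)) ↔
      (e ∈ A (padd D e) ∨ drev e ∈ A (padd D e)) := by
  have hpadd : padd D e ⊆ E := padd_subset hD he ((hE_symm e).1 he)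
  have hsub : oplus D e ⊆ E := (oplus_subset_padd D e).trans hpadd
  have hsub_rev : oplus D (drev e) ⊆ E := (oplus_drev_subset_padd D e).trans hpadd
  have hF := (hA (padd D e) hpadd (hDf.mono (subset_padd D e))).1
  rw [← not_iff_not, not_not, not_or]
  constructor
  · rintro ⟨hadm, hadm_rev, hA_eq⟩
    have hmin := (hA _ hsub hadm).1
    have hmin_rev : IsMinCostFlow E (oplus D (drev e)) d w (ind (A (oplus D e))) :=
      hA_eq ▸ (hA _ hsub_rev hadm_rev).1
    rw [← ind_injective (hA.eq_of_isMinCostFlow hpadd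
      (hmin.of_oplus hE_symm (fun x hx => (hw x hx).le) he hmin_rev))]
    exact ⟨hmin_rev.1.notMem_of_ind (drev_notMem_oplus D (drev e)),
      hmin.1.notMem_of_ind (drev_notMem_oplus D e)⟩
  · rintro ⟨he_notMem, hrev_notMem⟩
    have h := hF.oplus_of_padd (by simp [ind, hrev_notMem])
    have hF_rev : IsMinCostFlow E (padd D (drev e)) d w (ind (A (padd D e))) := by
      rwa [padd_drev]
    have hrev := hF_rev.oplus_of_padd (by simp [ind, he_notMem])
    exact ⟨⟨_, h.1⟩, ⟨_, hrev.1⟩, ind_injective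
      ((hA.eq_of_isMinCostFlow hsub h).symm.trans (hA.eq_of_isMinCostFlow hsub_rev hrev))⟩

theorem minCostFlow_oplus_ne_oplus_rev_iff
    {V : Type*} [Fintype V] [DecidableEq V]
    (E : Finset (V × V)) (hE_symm : ∀ e, e ∈ E ↔ drev e ∈ E)
    (hE_ne : ∀ e ∈ E, e.1 ≠ e.2)
    (d : V → ℤ) (hd : ∑ u : V, d u = 0)
    (w : V × V → ℝ) (hw : ∀ e ∈ E, 0 < w e)
    (A : Finset (V × V) → Finset (V × V)) (hA : GoodA E d w A)
    (D : Finset (V × V)) (hD : D ⊆ E) (hDf : AdmitsFlow E D d)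
    (e : V × V) (he : e ∈ E) :
    ¬ AEq E d A (oplus D e) (oplus D (drev e)) ↔
      (e ∈ A (padd D e) ∨ drev e ∈ A (padd D e)) :=
  minCostFlow_oplus_ne_oplus_rev_iff_general E hE_symm d w hw A hA D hD hDf e he
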